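/- For random variables X, Y, W, U on finite alphabets, and any conditional probability mass functions q1(w) and q2(u | w, y) that are positive on the support of the respective true distributions, I(X;W) + I(X;U | Y,W) ≤ E[ log(p(w|x)/q1(w)) + log(p(u|w,x,y)/q2(u|w,y)) ], where the expectation is over the joint law of (X,Y,W,U). -/

import Mathlib

/-!
Multiplying and dividing by `p(w)` and `p(u|y,w)` inside the logarithms splits, on the support of
`p`, the integrand `log (p(w|x)/q1(w)) + log (p(u|w,x,y)/q2(u|w,y))` into the integrands of
`I(X;W)` and `I(X;U|Y,W)` plus `log (p(w)/q1(w)) + log (p(u|y,w)/q2(u|w,y))`. After taking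
expectations the gap is therefore `D(p(w) ‖ q1) + D(p(u|y,w) ‖ q2 | Y,W)`, which is nonnegative
by Gibbs' inequality, i.e. by summing `a - b ≤ a log (a / b)`.
-/

open BigOperators Finset Real

noncomputable section

variable {X Y W U : Type*} [Fintype X] [Fintype Y] [Fintype W] [Fintype U]

/-- marginal of `X` -/
def margX (p : X → Y → W → U → ℝ) (x : X) : ℝ := ∑ y, ∑ w, ∑ u, p x y w u

/-- marginal of `(X,Y)` -/
def margXY (p : X → Y → W → U → ℝ) (x : X) (y : Y) : ℝ := ∑ w, ∑ u, p x y w u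

/-- marginal of `(X,W)` -/
def margXW (p : X → Y → W → U → ℝ) (x : X) (w : W) : ℝ := ∑ y, ∑ u, p x y w u

/-- marginal of `(X,W,U)` -/
def margXWU (p : X → Y → W → U → ℝ) (x : X) (w : W) (u : U) : ℝ := ∑ y, p x y w u

/-- marginal of `W` -/
def margW (p : X → Y → W → U → ℝ) (w : W) : ℝ := ∑ x, ∑ y, ∑ u, p x y w u

/-- marginal of `(Y,W)` -/
def margYW (p : X → Y → W → U → ℝ) (y : Y) (w : W) : ℝ := ∑ x, ∑ u, p x y w u

/-- marginal of `(X,Y,W)` -/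
def margXYW (p : X → Y → W → U → ℝ) (x : X) (y : Y) (w : W) : ℝ := ∑ u, p x y w u

/-- marginal of `(W,U)` -/
def margWU (p : X → Y → W → U → ℝ) (w : W) (u : U) : ℝ := ∑ x, ∑ y, p x y w u

/-- marginal of `(Y,W,U)` -/
def margYWU (p : X → Y → W → U → ℝ) (y : Y) (w : W) (u : U) : ℝ := ∑ x, p x y w u

/-- mutual information `I(X;W)` -/
def miXW (p : X → Y → W → U → ℝ) : ℝ :=
  ∑ x, ∑ y, ∑ w, ∑ u, p x y w u *
    Real.log (margXW p x w / (margX p x * margW p w))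

/-- mutual information `I(X;(W,U))` -/
def miXWU (p : X → Y → W → U → ℝ) : ℝ :=
  ∑ x, ∑ y, ∑ w, ∑ u, p x y w u *
    Real.log (margXWU p x w u / (margX p x * margWU p w u))

/-- conditional mutual information `I(X;U∣Y,W)` -/
def cmiXU_YW (p : X → Y → W → U → ℝ) : ℝ :=
  ∑ x, ∑ y, ∑ w, ∑ u, p x y w u *
    Real.log (margYW p y w * p x y w u / (margXYW p x y w * margYWU p y w u))

/-- conditional mutual information `I(U;X∣W)` -/
def cmiUX_W (p : X → Y → W → U → ℝ) : ℝ :=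
  ∑ x, ∑ y, ∑ w, ∑ u, p x y w u *
    Real.log (margW p w * margXWU p x w u / (margXW p x w * margWU p w u))

/-- conditional mutual information `I(U;Y∣W)` -/
def cmiUY_W (p : X → Y → W → U → ℝ) : ℝ :=
  ∑ x, ∑ y, ∑ w, ∑ u, p x y w u *
    Real.log (margW p w * margYWU p y w u / (margYW p y w * margWU p w u))

lemma sub_le_mul_log_div {a b : ℝ} (ha : 0 ≤ a) (hb : 0 ≤ b) (hab : 0 < a → 0 < b) :
    a - b ≤ a * log (a / b) := by
  rcases ha.eq_or_lt with rfl | ha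
  · simpa using hb
  have hlog := one_sub_inv_le_log_of_pos (div_pos ha (hab ha))
  calc a - b = a * (1 - (a / b)⁻¹) := by field_simp
    _ ≤ a * log (a / b) := by gcongr

lemma sum_mul_log_div_nonneg {ι : Type*} (s : Finset ι) {a b : ι → ℝ}
    (ha : ∀ i ∈ s, 0 ≤ a i) (hb : ∀ i ∈ s, 0 ≤ b i) (hab : ∀ i ∈ s, 0 < a i → 0 < b i)
    (hmass : ∑ i ∈ s, b i ≤ ∑ i ∈ s, a i) :
    0 ≤ ∑ i ∈ s, a i * log (a i / b i) :=
  calc 0 ≤ ∑ i ∈ s, (a i - b i) := by rw [sum_sub_distrib]; linarith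
    _ ≤ _ := sum_le_sum fun i hi => sub_le_mul_log_div (ha i hi) (hb i hi) (hab i hi)

/-- The relative entropy `D(p(w) ‖ q1(w))`. -/
def klW (p : X → Y → W → U → ℝ) (q1 : W → ℝ) : ℝ :=
  ∑ w, margW p w * log (margW p w / q1 w)

/-- The conditional relative entropy `D(p(u|y,w) ‖ q2(u|w,y) | Y,W)`. -/
def condKlU_YW (p : X → Y → W → U → ℝ) (q2 : U → W → Y → ℝ) : ℝ :=
  ∑ y, ∑ w, ∑ u, margYWU p y w u * log (margYWU p y w u / (margYW p y w * q2 u w y))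

section Variational

variable {p : X → Y → W → U → ℝ} {q1 : W → ℝ} {q2 : U → W → Y → ℝ}

lemma sum_mul_eq_sum_margW_mul (f : W → ℝ) :
    ∑ x, ∑ y, ∑ w, ∑ u, p x y w u * f w = ∑ w, margW p w * f w := by
  simp only [margW, sum_mul]
  symm
  rw [sum_comm]
  exact sum_congr rfl fun x _ => sum_comm

lemma sum_mul_eq_sum_margYWU_mul (f : Y → W → U → ℝ) :
    ∑ x, ∑ y, ∑ w, ∑ u, p x y w u * f y w u =
      ∑ y, ∑ w, ∑ u, margYWU p y w u * f y w u := by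
  simp only [margYWU, sum_mul]
  rw [sum_comm]
  refine sum_congr rfl fun y _ => ?_
  rw [sum_comm]
  exact sum_congr rfl fun w _ => sum_comm

lemma klW_nonneg (hp : ∀ x y w u, 0 ≤ p x y w u) (hsum : ∑ x, ∑ y, ∑ w, ∑ u, p x y w u = 1)
    (hq1 : ∀ w, 0 ≤ q1 w) (hq1sum : ∑ w, q1 w = 1) (hq1pos : ∀ w, 0 < margW p w → 0 < q1 w) :
    0 ≤ klW p q1 := by
  have hmass : ∑ w, margW p w = 1 := by
    simpa [hsum] using (sum_mul_eq_sum_margW_mul (p := p) fun _ => 1).symm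
  refine sum_mul_log_div_nonneg _ (fun w _ => ?_) (fun w _ => hq1 w) (fun w _ => hq1pos w)
    (by rw [hmass, hq1sum])
  exact sum_nonneg fun x _ => sum_nonneg fun y _ => sum_nonneg fun u _ => hp x y w u

lemma condKlU_YW_nonneg (hp : ∀ x y w u, 0 ≤ p x y w u) (hq2 : ∀ u w y, 0 ≤ q2 u w y)
    (hq2sum : ∀ w y, ∑ u, q2 u w y = 1)
    (hq2pos : ∀ u w y, 0 < margYWU p y w u → 0 < q2 u w y) :
    0 ≤ condKlU_YW p q2 := by
  refine sum_nonneg fun y _ => sum_nonneg fun w _ => ?_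
  have hmass : ∑ u, margYWU p y w u = margYW p y w := sum_comm
  have hYW : 0 ≤ margYW p y w := sum_nonneg fun x _ => sum_nonneg fun u _ => hp x y w u
  have hYWU_le (u : U) : margYWU p y w u ≤ margYW p y w :=
    hmass ▸ single_le_sum (fun u _ => sum_nonneg fun x _ => hp x y w u) (mem_univ u)
  refine sum_mul_log_div_nonneg _ (fun u _ => sum_nonneg fun x _ => hp x y w u)
    (fun u _ => mul_nonneg hYW (hq2 u w y))
    (fun u _ h => mul_pos (h.trans_le (hYWU_le u)) (hq2pos u w y h)) ?_
  rw [← mul_sum, hq2sum, mul_one, hmass]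

lemma log_variational_split (hp : ∀ x y w u, 0 ≤ p x y w u)
    (hq1pos : ∀ w, 0 < margW p w → 0 < q1 w)
    (hq2pos : ∀ u w y, 0 < margYWU p y w u → 0 < q2 u w y)
    {x : X} {y : Y} {w : W} {u : U} (hpos : 0 < p x y w u) :
    log ((margXW p x w / margX p x) / q1 w) + log ((p x y w u / margXYW p x y w) / q2 u w y) =
      log (margXW p x w / (margX p x * margW p w)) +
        log (margYW p y w * p x y w u / (margXYW p x y w * margYWU p y w u)) +
        (log (margW p w / q1 w) + log (margYWU p y w u / (margYW p y w * q2 u w y))) := by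
  have hXYW : 0 < margXYW p x y w :=
    hpos.trans_le (single_le_sum (fun u _ => hp x y w u) (mem_univ u))
  have hXW : 0 < margXW p x w :=
    hXYW.trans_le (single_le_sum (fun y _ => sum_nonneg fun u _ => hp x y w u) (mem_univ y))
  have hX : 0 < margX p x := hXW.trans_le <|
    sum_le_sum fun y _ => single_le_sum (fun w _ => sum_nonneg fun u _ => hp x y w u) (mem_univ w)
  have hW : 0 < margW p w := hXW.trans_le <|
    single_le_sum (fun x _ => sum_nonneg fun y _ => sum_nonneg fun u _ => hp x y w u) (mem_univ x)
  have hYWU : 0 < margYWU p y w u := hpos.trans_le (single_le_sum (fun x _ => hp x y w u) (mem_univ x))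
  have hYW : 0 < margYW p y w := hYWU.trans_le <|
    sum_le_sum fun x _ => single_le_sum (fun u _ => hp x y w u) (mem_univ u)
  have hq1 := hq1pos w hW
  have hq2 := hq2pos u w y hYWU
  have e1 : margXW p x w / margX p x / q1 w =
      margXW p x w / (margX p x * margW p w) * (margW p w / q1 w) := by
    field_simp
  have e2 : p x y w u / margXYW p x y w / q2 u w y =
      margYW p y w * p x y w u / (margXYW p x y w * margYWU p y w u) *
        (margYWU p y w u / (margYW p y w * q2 u w y)) := by
    field_simp
  rw [e1, e2, log_mul (by positivity) (by positivity), log_mul (by positivity) (by positivity)]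
  ring

lemma sum_mul_log_variational_eq (hp : ∀ x y w u, 0 ≤ p x y w u)
    (hq1pos : ∀ w, 0 < margW p w → 0 < q1 w)
    (hq2pos : ∀ u w y, 0 < margYWU p y w u → 0 < q2 u w y) :
    ∑ x, ∑ y, ∑ w, ∑ u, p x y w u *
        (log ((margXW p x w / margX p x) / q1 w) +
         log ((p x y w u / margXYW p x y w) / q2 u w y)) =
      miXW p + cmiXU_YW p + (klW p q1 + condKlU_YW p q2) := by
  rw [klW, condKlU_YW, ← sum_mul_eq_sum_margW_mul, ← sum_mul_eq_sum_margYWU_mul, miXW, cmiXU_YW]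
  simp only [← sum_add_distrib]
  refine sum_congr rfl fun x _ => sum_congr rfl fun y _ => sum_congr rfl fun w _ =>
    sum_congr rfl fun u _ => ?_
  rcases (hp x y w u).eq_or_lt with h | h
  · simp [← h]
  · rw [log_variational_split hp hq1pos hq2pos h]
    ring

end Variational

/-- **conditional formulation variational bound.** For finite-alphabet random
variables `X, Y, W, U` and any pmfs `q1(w)` and `q2(u ∣ w, y)` positive on the support of the
corresponding true distributions,
`I(X;W) + I(X;U∣Y,W) ≤ E[ log(p(w|x)/q1(w)) + log(p(u|w,x,y)/q2(u|w,y)) ]`. -/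
theorem conditional_variational_bound (p : X → Y → W → U → ℝ)
    (q1 : W → ℝ) (q2 : U → W → Y → ℝ)
    (hp : ∀ x y w u, 0 ≤ p x y w u)
    (hsum : ∑ x, ∑ y, ∑ w, ∑ u, p x y w u = 1)
    (hq1 : ∀ w, 0 ≤ q1 w) (hq1sum : ∑ w, q1 w = 1)
    (hq1pos : ∀ w, 0 < margW p w → 0 < q1 w)
    (hq2 : ∀ u w y, 0 ≤ q2 u w y) (hq2sum : ∀ w y, ∑ u, q2 u w y = 1)
    (hq2pos : ∀ u w y, 0 < margYWU p y w u → 0 < q2 u w y) :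
    miXW p + cmiXU_YW p ≤
      ∑ x, ∑ y, ∑ w, ∑ u, p x y w u *
        (Real.log ((margXW p x w / margX p x) / q1 w) +
         Real.log ((p x y w u / margXYW p x y w) / q2 u w y)) := by
  rw [sum_mul_log_variational_eq hp hq1pos hq2pos]
  have hW := klW_nonneg hp hsum hq1 hq1sum hq1pos
  have hU := condKlU_YW_nonneg hp hq2 hq2sum hq2pos
  linarith
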